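/- arXiv:2505.12790 — 2 statements merged into one kernel-verified Lean document; each statement's English description precedes it below -/
import Mathlib

section
/- Let n ≥ 1, let X = {x ∈ ℝ^{n+2} : x₀ = x_{n+1} = 0} with norm ‖x‖₁ = (Σ_{k=1}^{n+1}(x_k − x_{k−1})²)^{1/2}, and let γ > 0 satisfy (Σ_{k=1}^n x_k²)^{1/2} ≤ γ‖x‖₁ for all x ∈ X. Let K : [0,∞) → ℝ be continuous and suppose there exist η₁, η₂ > 0 with ∫₀ᵗ K(s)ds ≥ η₁ t − η₂ for all t ≥ 0. Let f₁,…,f_n : ℝ → ℝ be continuous and η₃ > 0 be such that |∫₀ᵗ f_k(s)ds| ≤ η₃(t² + 1) for all t ∈ ℝ and all k. Define Q(x) = (1/2)∫₀^{‖x‖₁²} K(s)ds and ψ(x) = (∫₀^{x₁} f₁(s)ds, …, ∫₀^{x_n} f_n(s)ds). Then for every μ ∈ ℝⁿ with Euclidean norm ‖μ‖₂ < η₁/(2η₃γ²), the functional x ↦ Q(x) − ⟨ψ(x), μ⟩₂ on X satisfies Q(x) − ⟨ψ(x), μ⟩₂ ≥ (η₁/2)‖x‖₁² − ‖μ‖₂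 η₃(γ²‖x‖₁² + n) − η₂/2 for all x ∈ X, and in particular Q(x) − ⟨ψ(x), μ⟩₂ → +∞ as ‖x‖₁ → +∞. -/
/-!
The Poincaré inequality bounds `Σ x_k²` by `γ² ‖x‖₁²`, the growth bound on the primitives of `f_k`
bounds `|ψ_k(x)|` by `η₃ (x_k² + 1)`, and `|μ_k| ≤ ‖μ‖₂`; hence
`⟨ψ(x), μ⟩₂ ≤ ‖μ‖₂ η₃ (γ² ‖x‖₁² + n)`, which with `Q(x) ≥ (η₁ ‖x‖₁² − η₂) / 2` is the estimate.
Its right-hand side is `(η₁/2 − ‖μ‖₂ η₃ γ²) ‖x‖₁² − const`, and the smallness of `μ` makes the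
leading coefficient positive.
-/

open Finset

lemma le_sq_mul_of_sqrt_le_mul_sqrt {a b γ : ℝ} (ha : 0 ≤ a) (hb : 0 ≤ b)
    (h : √a ≤ γ * √b) : a ≤ γ ^ 2 * b := by
  have hsq := pow_le_pow_left₀ (Real.sqrt_nonneg a) h 2
  rwa [mul_pow, Real.sq_sqrt ha, Real.sq_sqrt hb] at hsq

lemma abs_le_sqrt_sum_sq {ι : Type*} [Fintype ι] (μ : ι → ℝ) (k : ι) :
    |μ k| ≤ √(∑ i, μ i ^ 2) :=
  Real.abs_le_sqrt (single_le_sum (fun i _ => sq_nonneg (μ i)) (mem_univ k))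

lemma sum_mul_le_of_abs_le_mul_sq_add_one {ι : Type*} [Fintype ι] {a y : ι → ℝ} {η : ℝ}
    (ha : ∀ k, |a k| ≤ η * (y k ^ 2 + 1)) (μ : ι → ℝ) :
    ∑ k, a k * μ k ≤ √(∑ k, μ k ^ 2) * η * (∑ k, y k ^ 2 + Fintype.card ι) := by
  calc ∑ k, a k * μ k ≤ ∑ k, η * (y k ^ 2 + 1) * √(∑ i, μ i ^ 2) := by
        refine sum_le_sum fun k _ => ?_
        calc a k * μ k ≤ |a k| * |μ k| := by rw [← abs_mul]; exact le_abs_self _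
          _ ≤ |a k| * √(∑ i, μ i ^ 2) :=
            mul_le_mul_of_nonneg_left (abs_le_sqrt_sum_sq μ k) (abs_nonneg _)
          _ ≤ η * (y k ^ 2 + 1) * √(∑ i, μ i ^ 2) :=
            mul_le_mul_of_nonneg_right (ha k) (Real.sqrt_nonneg _)
    _ = √(∑ k, μ k ^ 2) * η * (∑ k, y k ^ 2 + Fintype.card ι) := by
        rw [← sum_mul, ← mul_sum, sum_add_distrib]
        simp only [sum_const, card_univ, nsmul_eq_mul, mul_one]
        ring

lemma exists_forall_le_of_mul_sub_le {c : ℝ} (hc : 0 < c) (d M : ℝ) :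
    ∃ R, ∀ t F : ℝ, 0 ≤ t → R ≤ √t → c * t - d ≤ F → M ≤ F := by
  refine ⟨√((M + d) / c), fun t F ht hR hF => ?_⟩
  have hMt : M + d ≤ c * t := by
    rw [← div_le_iff₀' hc]
    exact (Real.sqrt_le_sqrt_iff ht).1 hR
  linarith

theorem coercivity_estimate_general (n : ℕ) (γ : ℝ) (hγ : 0 < γ)
    (hpoincare : ∀ x : Fin (n + 2) → ℝ, x 0 = 0 → x (Fin.last (n + 1)) = 0 →
      Real.sqrt (∑ k : Fin n, (x k.succ.castSucc) ^ 2) ≤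
        γ * Real.sqrt (∑ k : Fin (n + 1), (x k.succ - x k.castSucc) ^ 2))
    (K : ℝ → ℝ)
    (η₁ η₂ : ℝ)
    (hKbound : ∀ t : ℝ, 0 ≤ t → η₁ * t - η₂ ≤ ∫ s in (0 : ℝ)..t, K s)
    (f : Fin n → ℝ → ℝ)
    (η₃ : ℝ) (hη₃ : 0 < η₃)
    (hfbound : ∀ k : Fin n, ∀ t : ℝ, |∫ s in (0 : ℝ)..t, f k s| ≤ η₃ * (t ^ 2 + 1)) :
    ∀ μ : Fin n → ℝ, Real.sqrt (∑ k, (μ k) ^ 2) < η₁ / (2 * η₃ * γ ^ 2) →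
      (∀ x : Fin (n + 2) → ℝ, x 0 = 0 → x (Fin.last (n + 1)) = 0 →
        (1 / 2) * (∫ s in (0 : ℝ)..(∑ h : Fin (n + 1), (x h.succ - x h.castSucc) ^ 2), K s) -
            (∑ k : Fin n, (∫ s in (0 : ℝ)..(x k.succ.castSucc), f k s) * μ k) ≥
          (η₁ / 2) * (∑ h : Fin (n + 1), (x h.succ - x h.castSucc) ^ 2) -
            Real.sqrt (∑ k, (μ k) ^ 2) * η₃ *
              (γ ^ 2 * (∑ h : Fin (n + 1), (x h.succ - x h.castSucc) ^ 2) + n) -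
            η₂ / 2) ∧
      (∀ M : ℝ, ∃ R : ℝ, ∀ x : Fin (n + 2) → ℝ, x 0 = 0 → x (Fin.last (n + 1)) = 0 →
        R ≤ Real.sqrt (∑ h : Fin (n + 1), (x h.succ - x h.castSucc) ^ 2) →
        M ≤ (1 / 2) * (∫ s in (0 : ℝ)..(∑ h : Fin (n + 1), (x h.succ - x h.castSucc) ^ 2), K s) -
            (∑ k : Fin n, (∫ s in (0 : ℝ)..(x k.succ.castSucc), f k s) * μ k)) := by
  intro μ hμ
  have hm : 0 ≤ √(∑ k, μ k ^ 2) * η₃ := by positivity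
  refine (fun lower => ⟨lower, fun M => ?_⟩) fun x h0 hl => ?_
  · have hpoinc := le_sq_mul_of_sqrt_le_mul_sqrt (sum_nonneg fun _ _ => sq_nonneg _)
      (sum_nonneg fun _ _ => sq_nonneg _) (hpoincare x h0 hl)
    have hQ := hKbound (∑ h : Fin (n + 1), (x h.succ - x h.castSucc) ^ 2)
      (sum_nonneg fun _ _ => sq_nonneg _)
    have hψ := sum_mul_le_of_abs_le_mul_sq_add_one (fun k => hfbound k (x k.succ.castSucc)) μ
    rw [Fintype.card_fin] at hψ
    nlinarith [mul_le_mul_of_nonneg_left hpoinc hm]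
  have hc : 0 < η₁ / 2 - √(∑ k, μ k ^ 2) * η₃ * γ ^ 2 := by
    rw [lt_div_iff₀ (by positivity)] at hμ
    linarith
  obtain ⟨R, hR⟩ := exists_forall_le_of_mul_sub_le hc (√(∑ k, μ k ^ 2) * η₃ * n + η₂ / 2) M
  refine ⟨R, fun x h0 hl hx => hR _ _ (sum_nonneg fun _ _ => sq_nonneg _) hx ?_⟩
  linarith [lower x h0 hl]

/-- Coercivity estimate (2.6): with `‖x‖₁² = Σ_{k=1}^{n+1}(x_k − x_{k−1})²`,
`Q(x) = (1/2)∫₀^{‖x‖₁²} K`, `ψ(x) = (∫₀^{x₁} f₁, …, ∫₀^{x_n} f_n)`, and the stated bounds, for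
every `μ ∈ ℝⁿ` with `‖μ‖₂ < η₁/(2η₃γ²)` one has
`Q(x) − ⟨ψ(x), μ⟩₂ ≥ (η₁/2)‖x‖₁² − ‖μ‖₂ η₃(γ²‖x‖₁² + n) − η₂/2` on `X`, and
`Q(x) − ⟨ψ(x), μ⟩₂ → +∞` as `‖x‖₁ → +∞`. -/
theorem coercivity_estimate (n : ℕ) (hn : 1 ≤ n) (γ : ℝ) (hγ : 0 < γ)
    (hpoincare : ∀ x : Fin (n + 2) → ℝ, x 0 = 0 → x (Fin.last (n + 1)) = 0 →
      Real.sqrt (∑ k : Fin n, (x k.succ.castSucc) ^ 2) ≤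
        γ * Real.sqrt (∑ k : Fin (n + 1), (x k.succ - x k.castSucc) ^ 2))
    (K : ℝ → ℝ) (hK : ContinuousOn K (Set.Ici 0))
    (η₁ η₂ : ℝ) (hη₁ : 0 < η₁) (hη₂ : 0 < η₂)
    (hKbound : ∀ t : ℝ, 0 ≤ t → η₁ * t - η₂ ≤ ∫ s in (0 : ℝ)..t, K s)
    (f : Fin n → ℝ → ℝ) (hf : ∀ k, Continuous (f k))
    (η₃ : ℝ) (hη₃ : 0 < η₃)
    (hfbound : ∀ k : Fin n, ∀ t : ℝ, |∫ s in (0 : ℝ)..t, f k s| ≤ η₃ * (t ^ 2 + 1)) :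
    ∀ μ : Fin n → ℝ, Real.sqrt (∑ k, (μ k) ^ 2) < η₁ / (2 * η₃ * γ ^ 2) →
      (∀ x : Fin (n + 2) → ℝ, x 0 = 0 → x (Fin.last (n + 1)) = 0 →
        (1 / 2) * (∫ s in (0 : ℝ)..(∑ h : Fin (n + 1), (x h.succ - x h.castSucc) ^ 2), K s) -
            (∑ k : Fin n, (∫ s in (0 : ℝ)..(x k.succ.castSucc), f k s) * μ k) ≥
          (η₁ / 2) * (∑ h : Fin (n + 1), (x h.succ - x h.castSucc) ^ 2) -
            Real.sqrt (∑ k, (μ k) ^ 2) * η₃ *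
              (γ ^ 2 * (∑ h : Fin (n + 1), (x h.succ - x h.castSucc) ^ 2) + n) -
            η₂ / 2) ∧
      (∀ M : ℝ, ∃ R : ℝ, ∀ x : Fin (n + 2) → ℝ, x 0 = 0 → x (Fin.last (n + 1)) = 0 →
        R ≤ Real.sqrt (∑ h : Fin (n + 1), (x h.succ - x h.castSucc) ^ 2) →
        M ≤ (1 / 2) * (∫ s in (0 : ℝ)..(∑ h : Fin (n + 1), (x h.succ - x h.castSucc) ^ 2), K s) -
            (∑ k : Fin n, (∫ s in (0 : ℝ)..(x k.succ.castSucc), f k s) * μ k)) :=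
  coercivity_estimate_general n γ hγ hpoincare K η₁ η₂ hKbound f η₃ hη₃ hfbound
end

section
/- Let n ≥ 1, let X = {x ∈ ℝ^{n+2} : x₀ = x_{n+1} = 0} with norm ‖x‖₁ = (Σ_{k=1}^{n+1}(x_k − x_{k−1})²)^{1/2}. Let K : [0,∞) → ℝ and f₁,…,f_n : ℝ → ℝ be continuous and satisfy: (a) inf_{t>0} ∫₀ᵗ K(s)ds < 0 and liminf_{t→+∞}(∫₀ᵗ K(s)ds)/t > 0; (b) limsup_{|t|→+∞} |∫₀ᵗ f_k(s)ds|/t² < +∞ for each k; (c) for each k, t ↦ ∫₀ᵗ f_k(s)ds is odd and vanishes only at 0. Define Q(x) = (1/2)∫₀^{‖x‖₁²} K(s)ds and ψ(x) = (∫₀^{x₁} f₁(s)ds, …, ∫₀^{x_n} f_n(s)ds) ∈ ℝⁿ. Then there exists σ₀ > 0 such that for every σ ∈ (0, σ₀], taking Y to be the closed Euclidean ball in ℝⁿ of radius σ centered at 0, one has the strict minimax inequality sup_{μ∈Y} inf_{x∈X} (Q(x) − ⟨ψ(x), μ⟩₂) < inf_{x∈X} sup_{μ∈Y} (Q(x)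 − ⟨ψ(x), μ⟩₂). -/
open Filter

namespace StrictMinimaxAux

noncomputable def emb (n : ℕ) (y : Fin n → ℝ) : Fin (n + 2) → ℝ :=
  fun i => if h : 1 ≤ i.val ∧ i.val ≤ n then y ⟨i.val - 1, by omega⟩ else 0

noncomputable def T (n : ℕ) (x : Fin (n + 2) → ℝ) : ℝ :=
  ∑ h : Fin (n + 1), (x h.succ - x h.castSucc) ^ 2

variable {n : ℕ}

lemma emb_zero (i : Fin (n+2)) : emb n (fun _ => (0:ℝ)) i = 0 := by
  unfold emb; split_ifs <;> rfl

lemma emb_coord (y : Fin n → ℝ) (k : Fin n) : emb n y k.succ.castSucc = y k := by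
  have hk := k.isLt
  have hv : (k.succ.castSucc : Fin (n+2)).val = k.val + 1 := by
    simp [Fin.coe_castSucc, Fin.val_succ]
  unfold emb
  rw [dif_pos (by rw [hv]; omega)]
  congr 1

lemma emb_zero_idx (y : Fin n → ℝ) : emb n y 0 = 0 := by
  unfold emb; rw [dif_neg]; simp

lemma emb_last_idx (y : Fin n → ℝ) : emb n y (Fin.last (n+1)) = 0 := by
  unfold emb; rw [dif_neg]; simp [Fin.last]

lemma T_nonneg (x : Fin (n+2) → ℝ) : 0 ≤ T n x :=
  Finset.sum_nonneg fun _ _ => sq_nonneg _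

lemma T_neg (x : Fin (n+2) → ℝ) : T n (-x) = T n x := by
  unfold T
  apply Finset.sum_congr rfl
  intro h _
  simp only [Pi.neg_apply]
  ring

lemma sq_le_T (x : Fin (n + 2) → ℝ) (hx0 : x 0 = 0) (j : Fin (n + 2)) :
    (x j) ^ 2 ≤ (n + 1 : ℝ) * T n x := by
  classical
  set X' : ℕ → ℝ := fun i => if h : i < n + 2 then x ⟨i, h⟩ else 0 with hX'
  have hT : T n x = ∑ i ∈ Finset.range (n+1), (X' (i+1) - X' i)^2 := by
    rw [← Fin.sum_univ_eq_sum_range (fun i => (X' (i+1) - X' i)^2) (n+1)]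
    apply Finset.sum_congr rfl
    intro h _
    have h1 : X' (h.val + 1) = x h.succ := by
      simp only [hX']; rw [dif_pos (by omega : h.val + 1 < n + 2)]; rfl
    have h2 : X' h.val = x h.castSucc := by
      have := h.isLt
      simp only [hX']; rw [dif_pos (by omega : h.val < n + 2)]; rfl
    rw [h1, h2]
  have hxj : x j = ∑ i ∈ Finset.range j.val, (X' (i+1) - X' i) := by
    rw [Finset.sum_range_sub X']
    have h0 : X' 0 = 0 := by simp only [hX']; rw [dif_pos (by omega : 0 < n+2)]; exact hx0
    have hj : X' j.val = x j := by
      simp only [hX']; rw [dif_pos j.isLt]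
    rw [h0, hj, sub_zero]
  have hCS := sq_sum_le_card_mul_sum_sq (s := Finset.range j.val) (f := fun i => X' (i+1) - X' i)
  rw [← hxj] at hCS
  refine hCS.trans ?_
  rw [hT]
  have hsub : ∑ i ∈ Finset.range j.val, (X' (i+1) - X' i)^2
      ≤ ∑ i ∈ Finset.range (n+1), (X' (i+1) - X' i)^2 := by
    apply Finset.sum_le_sum_of_subset_of_nonneg
    · exact Finset.range_subset_range.2 (by have := j.isLt; omega)
    · intro i _ _; positivity
  have hcard : ((Finset.range j.val).card : ℝ) ≤ (n + 1 : ℝ) := by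
    simp only [Finset.card_range]
    exact_mod_cast (by have := j.isLt; omega : j.val ≤ n + 1)
  calc ((Finset.range j.val).card : ℝ) * ∑ i ∈ Finset.range j.val, (X' (i+1) - X' i)^2
      ≤ (n+1:ℝ) * ∑ i ∈ Finset.range j.val, (X' (i+1) - X' i)^2 := by
        apply mul_le_mul_of_nonneg_right hcard (Finset.sum_nonneg fun _ _ => sq_nonneg _)
    _ ≤ (n+1:ℝ) * ∑ i ∈ Finset.range (n+1), (X' (i+1) - X' i)^2 := by
        apply mul_le_mul_of_nonneg_left hsub (by positivity)

lemma T_emb_const (hn : 1 ≤ n) (c : ℝ) : T n (emb n (fun _ => c)) = 2 * c ^ 2 := by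
  classical
  unfold T
  have key : ∀ h : Fin (n+1), (emb n (fun _ => c) h.succ - emb n (fun _ => c) h.castSucc)^2
      = (if h = (0 : Fin (n+1)) then c^2 else 0) + (if h = Fin.last n then c^2 else 0) := by
    intro h
    have hlt := h.isLt
    have hsv : (h.succ : Fin (n+2)).val = h.val + 1 := rfl
    have hcv : (h.castSucc : Fin (n+2)).val = h.val := rfl
    have h0v : (0 : Fin (n+1)).val = 0 := rfl
    have hlv : (Fin.last n).val = n := rfl
    by_cases h0 : h.val = 0
    · have he0 : h = 0 := Fin.ext (by omega)
      have hne : h ≠ Fin.last n := by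
        intro hc; rw [hc] at h0; simp [hlv] at h0; omega
      have e1 : emb n (fun _ => c) h.succ = c := by
        unfold emb; rw [dif_pos (by rw [hsv]; omega)]
      have e2 : emb n (fun _ => c) h.castSucc = 0 := by
        unfold emb; rw [dif_neg (by rw [hcv]; omega)]
      rw [e1, e2, if_pos he0, if_neg hne]; ring
    · by_cases hN : h.val = n
      · have hel : h = Fin.last n := Fin.ext (by omega)
        have hne : h ≠ 0 := by intro hc; rw [hc] at hN; simp [h0v] at hN; omega
        have e1 : emb n (fun _ => c) h.succ = 0 := by
          unfold emb; rw [dif_neg (by rw [hsv]; omega)]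
        have e2 : emb n (fun _ => c) h.castSucc = c := by
          unfold emb; rw [dif_pos (by rw [hcv]; omega)]
        rw [e1, e2, if_pos hel, if_neg hne]; ring
      · have hne0 : h ≠ 0 := by intro hc; rw [hc] at h0; simp [h0v] at h0
        have hnel : h ≠ Fin.last n := by intro hc; rw [hc] at hN; simp [hlv] at hN
        have e1 : emb n (fun _ => c) h.succ = c := by
          unfold emb; rw [dif_pos (by rw [hsv]; omega)]
        have e2 : emb n (fun _ => c) h.castSucc = c := by
          unfold emb; rw [dif_pos (by rw [hcv]; omega)]
        rw [e1, e2, if_neg hne0, if_neg hnel]; ring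
  rw [Finset.sum_congr rfl (fun h _ => key h), Finset.sum_add_distrib]
  rw [Finset.sum_ite_eq' Finset.univ (0 : Fin (n+1)) (fun _ => c^2),
      Finset.sum_ite_eq' Finset.univ (Fin.last n) (fun _ => c^2)]
  simp; ring

lemma emb_eq_self (x : Fin (n+2) → ℝ) (hx0 : x 0 = 0) (hxl : x (Fin.last (n+1)) = 0) :
    emb n (fun k => x k.succ.castSucc) = x := by
  funext i
  unfold emb
  split_ifs with h
  · show x (⟨i.val - 1, _⟩ : Fin n).succ.castSucc = x i
    congr 1
    exact Fin.ext (by simp [Fin.castSucc, Fin.succ]; omega)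
  · have hi := i.isLt
    rcases (by omega : i.val = 0 ∨ i.val = n + 1) with h1 | h1
    · have : i = 0 := Fin.ext (by simpa using h1)
      rw [this]; exact hx0.symm
    · have : i = Fin.last (n+1) := Fin.ext (by simpa [Fin.val_last] using h1)
      rw [this]; exact hxl.symm

end StrictMinimaxAux

open StrictMinimaxAux

/-- Under hypotheses (a), (b), (c) of Theorem 2.1, with
`Q(x) = (1/2)∫₀^{‖x‖₁²} K` and `ψ(x) = (∫₀^{x₁} f₁, …, ∫₀^{x_n} f_n)` on
`X = {x ∈ ℝ^{n+2} : x₀ = x_{n+1} = 0}`, there is `σ₀ > 0` such that for every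
`σ ∈ (0, σ₀]`, taking `Y` the closed Euclidean ball of radius `σ` in `ℝⁿ`,
`sup_{μ∈Y} inf_{x∈X} (Q(x) − ⟨ψ(x), μ⟩₂) < inf_{x∈X} sup_{μ∈Y} (Q(x) − ⟨ψ(x), μ⟩₂)`. -/
theorem strict_minimax_on_X (n : ℕ) (hn : 1 ≤ n)
    (K : ℝ → ℝ) (f : Fin n → ℝ → ℝ)
    (hK : ContinuousOn K (Set.Ici 0)) (hf : ∀ k, Continuous (f k))
    (ha1 : (⨅ t ∈ Set.Ioi (0 : ℝ), ((∫ s in (0 : ℝ)..t, K s : ℝ) : EReal)) < 0)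
    (ha2 : 0 < Filter.liminf
      (fun t : ℝ => (((∫ s in (0 : ℝ)..t, K s) / t : ℝ) : EReal)) atTop)
    (hb : ∀ k, Filter.limsup
      (fun t : ℝ => ((|∫ s in (0 : ℝ)..t, f k s| / t ^ 2 : ℝ) : EReal)) (atBot ⊔ atTop) < ⊤)
    (hodd : ∀ k, ∀ t : ℝ, (∫ s in (0 : ℝ)..(-t), f k s) = -∫ s in (0 : ℝ)..t, f k s)
    (hvan : ∀ k, ∀ t : ℝ, (∫ s in (0 : ℝ)..t, f k s) = 0 → t = 0) :
    ∃ σ₀ > (0 : ℝ), ∀ σ : ℝ, 0 < σ → σ ≤ σ₀ →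
      (⨆ μ ∈ {μ : Fin n → ℝ | Real.sqrt (∑ k, (μ k) ^ 2) ≤ σ},
        ⨅ x ∈ {x : Fin (n + 2) → ℝ | x 0 = 0 ∧ x (Fin.last (n + 1)) = 0},
          (((1 / 2) * (∫ s in (0 : ℝ)..(∑ h : Fin (n + 1), (x h.succ - x h.castSucc) ^ 2), K s) -
              ∑ k : Fin n, (∫ s in (0 : ℝ)..(x k.succ.castSucc), f k s) * μ k : ℝ) : EReal)) <
      ⨅ x ∈ {x : Fin (n + 2) → ℝ | x 0 = 0 ∧ x (Fin.last (n + 1)) = 0},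
        ⨆ μ ∈ {μ : Fin n → ℝ | Real.sqrt (∑ k, (μ k) ^ 2) ≤ σ},
          (((1 / 2) * (∫ s in (0 : ℝ)..(∑ h : Fin (n + 1), (x h.succ - x h.castSucc) ^ 2), K s) -
              ∑ k : Fin n, (∫ s in (0 : ℝ)..(x k.succ.castSucc), f k s) * μ k : ℝ) : EReal) := by
  classical
  set G : ℝ → ℝ := fun t => ∫ s in (0:ℝ)..t, K s with hGdef
  have hGa : ∀ u : ℝ, (∫ s in (0:ℝ)..u, K s) = G u := fun _ => rfl
  have hG0 : G 0 = 0 := intervalIntegral.integral_same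
  -- continuity of G on [0, ∞)
  have hGc : ContinuousOn G (Set.Ici 0) := by
    intro t ht
    have ht1 : (0:ℝ) ≤ t + 1 := by have := ht; simp only [Set.mem_Ici] at this; linarith
    have hint : MeasureTheory.IntegrableOn K (Set.uIcc 0 (t+1)) := by
      rw [Set.uIcc_of_le ht1]
      exact (hK.mono (fun u hu => hu.1)).integrableOn_Icc
    have h2 := intervalIntegral.continuousOn_primitive_interval (a := (0:ℝ)) (b := t+1) hint
    have hmem : t ∈ Set.uIcc (0:ℝ) (t+1) := by
      rw [Set.uIcc_of_le ht1]
      simp only [Set.mem_Ici] at ht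
      exact ⟨ht, by linarith⟩
    have h3 : ContinuousWithinAt G (Set.uIcc 0 (t+1)) t := h2 t hmem
    apply h3.mono_of_mem_nhdsWithin
    rw [Set.uIcc_of_le ht1, ← Set.Ici_inter_Iic]
    exact Filter.inter_mem self_mem_nhdsWithin
      (mem_nhdsWithin_of_mem_nhds (Iic_mem_nhds (by simp only [Set.mem_Ici] at ht; linarith)))
  -- continuity of the primitives of f k
  have hPc : ∀ k, Continuous (fun t => ∫ s in (0:ℝ)..t, f k s) := fun k =>
    intervalIntegral.continuous_primitive (fun a b => (hf k).intervalIntegrable a b) 0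
  -- (a1): some point where G is negative
  have ha1' : ∃ t : ℝ, 0 < t ∧ G t < 0 := by
    rw [iInf_lt_iff] at ha1
    obtain ⟨t, ht⟩ := ha1
    rw [iInf_lt_iff] at ht
    obtain ⟨ht0, hlt⟩ := ht
    refine ⟨t, ht0, ?_⟩
    have : ((G t : ℝ) : EReal) < ((0:ℝ) : EReal) := by exact_mod_cast hlt
    exact_mod_cast this
  -- (a2): linear growth of G at infinity
  have ha2' : ∃ a : ℝ, 0 < a ∧ ∃ T0 : ℝ, 1 ≤ T0 ∧ ∀ t, T0 ≤ t → a * t ≤ G t := by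
    obtain ⟨a, ha0, haL⟩ := EReal.lt_iff_exists_real_btwn.1 ha2
    have ha0' : (0:ℝ) < a := by exact_mod_cast ha0
    have hev : ∀ᶠ t in atTop, (a : EReal) < (((G t / t : ℝ)) : EReal) :=
      Filter.eventually_lt_of_lt_liminf haL
    obtain ⟨T0, hT0⟩ := Filter.eventually_atTop.1 (hev.and (Filter.eventually_ge_atTop 1))
    refine ⟨a, ha0', max T0 1, le_max_right _ _, fun t ht => ?_⟩
    obtain ⟨h1, h2⟩ := hT0 t (le_trans (le_max_left _ _) ht)
    have h1' : a < G t / t := by exact_mod_cast h1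
    have htpos : 0 < t := lt_of_lt_of_le one_pos h2
    have := (lt_div_iff₀ htpos).1 h1'
    nlinarith
  obtain ⟨a, ha0, T0, hT01, hT0⟩ := ha2'
  -- minimum of G on [0, T0]
  obtain ⟨tstar, htstar, hts_min'⟩ :=
    isCompact_Icc.exists_isMinOn (Set.nonempty_Icc.2 (by linarith : (0:ℝ) ≤ T0))
      (hGc.mono (fun u hu => hu.1))
  have hts_min : ∀ t ∈ Set.Icc (0:ℝ) T0, G tstar ≤ G t := fun t ht => hts_min' ht
  set m := G tstar with hm
  have hm_le : ∀ t, 0 ≤ t → m ≤ G t := by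
    intro t ht
    by_cases h : t ≤ T0
    · exact hts_min t ⟨ht, h⟩
    · push_neg at h
      have h1 := hT0 t h.le
      have hm0 : m ≤ 0 := by
        have := hts_min 0 ⟨le_refl 0, by linarith⟩
        rw [hG0] at this; exact this
      nlinarith
  have hm_neg : m < 0 := by
    obtain ⟨tb, htb0, htbneg⟩ := ha1'
    have htble : tb ≤ T0 := by
      by_contra hc; push_neg at hc
      have := hT0 tb hc.le
      nlinarith
    exact lt_of_le_of_lt (hts_min tb ⟨htb0.le, htble⟩) htbneg
  refine ⟨1, one_pos, fun σ hσ hσ1 => ?_⟩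
  -- the perturbed functional on ℝⁿ
  set N : (Fin n → ℝ) → ℝ :=
    fun y => Real.sqrt (∑ k, (∫ s in (0:ℝ)..(y k), f k s)^2) with hNdef
  set g : (Fin n → ℝ) → ℝ := fun y => (1/2) * G (T n (emb n y)) + σ * N y with hgdef
  have hga : ∀ y, g y = (1/2) * G (T n (emb n y)) + σ * N y := fun _ => rfl
  have hNa : ∀ y, N y = Real.sqrt (∑ k, (∫ s in (0:ℝ)..(y k), f k s)^2) := fun _ => rfl
  have hNnn : ∀ y, 0 ≤ N y := fun y => Real.sqrt_nonneg _
  have hembc : ∀ i : Fin (n+2), Continuous (fun y : Fin n → ℝ => emb n y i) := by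
    intro i
    unfold emb
    split_ifs with hc
    · exact continuous_apply _
    · exact continuous_const
  have hTcont : Continuous (fun y : Fin n → ℝ => T n (emb n y)) := by
    unfold T
    apply continuous_finset_sum
    intro h _
    exact ((hembc h.succ).sub (hembc h.castSucc)).pow 2
  have hgcont : Continuous g := by
    have h1 : Continuous (fun y => G (T n (emb n y))) :=
      hGc.comp_continuous hTcont (fun y => T_nonneg _)
    have h2 : Continuous N := by
      apply Real.continuous_sqrt.comp
      apply continuous_finset_sum
      intro k _
      exact ((hPc k).comp (continuous_apply k)).pow 2
    exact (continuous_const.mul h1).add (continuous_const.mul h2)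
  have hT0emb : T n (emb n (0 : Fin n → ℝ)) = 0 := by
    unfold T
    apply Finset.sum_eq_zero
    intro h _
    have e1 : emb n (0 : Fin n → ℝ) h.succ = 0 := emb_zero _
    have e2 : emb n (0 : Fin n → ℝ) h.castSucc = 0 := emb_zero _
    rw [e1, e2]; ring
  have hg0 : g 0 = 0 := by
    rw [hga, hT0emb, hG0, hNa]
    simp [intervalIntegral.integral_same]
  have hcoc : ∀ᶠ y in cocompact (Fin n → ℝ), g 0 ≤ g y := by
    filter_upwards [tendsto_norm_cocompact_atTop.eventually_ge_atTop
      (Real.sqrt ((n+1) * T0) + 1)] with y hy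
    rw [hg0]
    have hTy : T0 ≤ T n (emb n y) := by
      have hb : ∀ k, |y k| ≤ Real.sqrt ((n+1) * T n (emb n y)) := by
        intro k
        apply Real.abs_le_sqrt
        have := sq_le_T (emb n y) (emb_zero_idx y) (k.succ.castSucc)
        rwa [emb_coord] at this
      have hnorm : ‖y‖ ≤ Real.sqrt ((n+1) * T n (emb n y)) := by
        refine (pi_norm_le_iff_of_nonneg (Real.sqrt_nonneg _)).2 ?_
        intro k; rw [Real.norm_eq_abs]; exact hb k
      have h1 : Real.sqrt ((n+1)*T0) + 1 ≤ Real.sqrt ((n+1) * T n (emb n y)) :=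
        le_trans hy hnorm
      have hA0 : (0:ℝ) ≤ (n+1) * T0 := by positivity
      have hA1 : (0:ℝ) ≤ (n+1) * T n (emb n y) := by
        have := T_nonneg (n := n) (emb n y); positivity
      have hs0 := Real.sq_sqrt hA0
      have hs1 := Real.sq_sqrt hA1
      have hs0nn := Real.sqrt_nonneg ((n+1) * T0)
      have hs1nn := Real.sqrt_nonneg ((n+1) * T n (emb n y))
      nlinarith
    have hGy : 0 ≤ G (T n (emb n y)) := by
      have h1 := hT0 _ hTy
      nlinarith
    have := hNnn y
    rw [hga]
    nlinarith
  obtain ⟨ystar, hystar⟩ := hgcont.exists_forall_le' 0 hcoc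
  set β := g ystar with hβ
  have hβm : m / 2 < β := by
    rcases eq_or_ne ystar 0 with h0 | h0
    · rw [hβ, h0, hg0]; linarith
    · obtain ⟨k, hk⟩ := Function.ne_iff.1 h0
      have hPk : (∫ s in (0:ℝ)..(ystar k), f k s) ≠ 0 := by
        intro hc
        exact hk (hvan k _ hc)
      have hNpos : 0 < N ystar := by
        rw [hNa]
        apply Real.sqrt_pos.2
        apply Finset.sum_pos' (fun i _ => sq_nonneg _)
        exact ⟨k, Finset.mem_univ k, by positivity⟩
      have hGge : m ≤ G (T n (emb n ystar)) := hm_le _ (T_nonneg _)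
      rw [hβ, hga]
      nlinarith
  -- final: LHS ≤ m/2 < β ≤ RHS
  have htstar0 : (0:ℝ) ≤ tstar := htstar.1
  refine lt_of_le_of_lt (b := ((m/2 : ℝ) : EReal)) ?_ (lt_of_lt_of_le (b := ((β : ℝ) : EReal)) ?_ ?_)
  · -- LHS ≤ m/2
    apply iSup₂_le
    intro μ hμ
    set c := Real.sqrt (tstar / 2) with hc
    have hc2 : 2 * c^2 = tstar := by
      rw [hc, Real.sq_sqrt (by linarith : (0:ℝ) ≤ tstar/2)]; ring
    set xb := emb n (fun _ => c) with hxb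
    have hxbT : T n xb = tstar := by rw [hxb, T_emb_const hn]; exact hc2
    have hxbcoord : ∀ k : Fin n, xb k.succ.castSucc = c := fun k => emb_coord _ k
    set S := ∑ k : Fin n, (∫ s in (0:ℝ)..c, f k s) * μ k with hS
    by_cases hS0 : 0 ≤ S
    · refine iInf₂_le_of_le xb ⟨emb_zero_idx _, emb_last_idx _⟩ ?_
      rw [EReal.coe_le_coe_iff]
      have e1 : (∑ h : Fin (n+1), (xb h.succ - xb h.castSucc)^2) = tstar := hxbT
      have e2 : ∑ k : Fin n, (∫ s in (0:ℝ)..(xb k.succ.castSucc), f k s) * μ k = S := by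
        rw [hS]
        apply Finset.sum_congr rfl
        intro k _
        rw [hxbcoord k]
      rw [e1, e2, hGa]
      have : G tstar = m := rfl
      rw [this]
      linarith
    · push_neg at hS0
      refine iInf₂_le_of_le (-xb) ⟨?_, ?_⟩ ?_
      · show (-xb) 0 = 0
        rw [Pi.neg_apply, hxb, emb_zero_idx]; ring
      · show (-xb) (Fin.last (n+1)) = 0
        rw [Pi.neg_apply, hxb, emb_last_idx]; ring
      rw [EReal.coe_le_coe_iff]
      have e1 : (∑ h : Fin (n+1), ((-xb) h.succ - (-xb) h.castSucc)^2) = tstar :=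
        (T_neg xb).trans hxbT
      have e2 : ∑ k : Fin n, (∫ s in (0:ℝ)..((-xb) k.succ.castSucc), f k s) * μ k = -S := by
        rw [hS, ← Finset.sum_neg_distrib]
        apply Finset.sum_congr rfl
        intro k _
        rw [Pi.neg_apply, hxbcoord k, hodd k c]
        ring
      rw [e1, e2, hGa]
      have : G tstar = m := rfl
      rw [this]
      linarith
  · exact_mod_cast hβm
  · -- β ≤ RHS
    apply le_iInf₂
    intro x hx
    have hx0 : x 0 = 0 := hx.1
    have hxl : x (Fin.last (n+1)) = 0 := hx.2
    set y : Fin n → ℝ := fun k => x k.succ.castSucc with hy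
    have hey : emb n y = x := emb_eq_self x hx0 hxl
    have hgy : β ≤ g y := hystar y
    have hsum_nn : (0:ℝ) ≤ ∑ k, (∫ s in (0:ℝ)..(y k), f k s)^2 :=
      Finset.sum_nonneg fun _ _ => sq_nonneg _
    have hTx : (∑ h : Fin (n+1), (x h.succ - x h.castSucc)^2) = T n (emb n y) := by
      rw [hey]; rfl
    by_cases hN0 : (∑ k, (∫ s in (0:ℝ)..(y k), f k s)^2) = 0
    · refine le_iSup₂_of_le 0 ?_ ?_
      · show Real.sqrt (∑ k : Fin n, ((0 : Fin n → ℝ) k)^2) ≤ σ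
        simp [hσ.le]
      rw [EReal.coe_le_coe_iff]
      have hNy0 : N y = 0 := by rw [hNa, hN0, Real.sqrt_zero]
      have e2 : ∑ k : Fin n, (∫ s in (0:ℝ)..(x k.succ.castSucc), f k s) * (0 : Fin n → ℝ) k = 0 := by
        simp
      rw [e2, hTx, hGa]
      have := hgy
      rw [hga, hNy0] at this
      linarith
    · have hsum_pos : 0 < ∑ k, (∫ s in (0:ℝ)..(y k), f k s)^2 :=
        lt_of_le_of_ne hsum_nn (Ne.symm hN0)
      have hNpos : 0 < N y := by rw [hNa]; exact Real.sqrt_pos.2 hsum_pos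
      have hNsq : N y ^ 2 = ∑ k, (∫ s in (0:ℝ)..(y k), f k s)^2 := by
        rw [hNa]; exact Real.sq_sqrt hsum_nn
      set μs : Fin n → ℝ := fun k => -(σ * (∫ s in (0:ℝ)..(y k), f k s) / N y) with hμs
      have hmem : Real.sqrt (∑ k, (μs k)^2) ≤ σ := by
        have e : ∑ k, (μs k)^2 = σ^2 := by
          have : ∀ k : Fin n, (μs k)^2
              = (σ^2 / N y ^ 2) * (∫ s in (0:ℝ)..(y k), f k s)^2 := by
            intro k
            rw [hμs]
            field_simp
          rw [Finset.sum_congr rfl (fun k _ => this k), ← Finset.mul_sum, ← hNsq]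
          field_simp
        rw [e, Real.sqrt_sq hσ.le]
      refine le_iSup₂_of_le μs hmem ?_
      rw [EReal.coe_le_coe_iff]
      have hdot : ∑ k : Fin n, (∫ s in (0:ℝ)..(x k.succ.castSucc), f k s) * μs k
          = -(σ * N y) := by
        have : ∀ k : Fin n, (∫ s in (0:ℝ)..(x k.succ.castSucc), f k s) * μs k
            = -(σ / N y) * (∫ s in (0:ℝ)..(y k), f k s)^2 := by
          intro k
          have hyx : x k.succ.castSucc = y k := rfl
          rw [hyx, hμs]
          field_simp [ne_of_gt hNpos]
        rw [Finset.sum_congr rfl (fun k _ => this k), ← Finset.mul_sum, ← hNsq]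
        field_simp
      rw [hdot, hTx, hGa]
      have := hgy
      rw [hga] at this
      linarith
end
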